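/- Let β ∈ C_c^∞(ℝ²) and set β_q(x) := β(x−q). For every Λ > 0 there is a constant C > 0, depending only on φ, β and Λ, such that for every λ ∈ [0,Λ], every q ∈ ℝ², and every Schwartz function u : ℝ² → ℂ satisfying Pu = 0: ‖P(β_q u)‖_{L²(ℝ²)} ≤ C ‖u‖_{L²(ℝ²)}. -/

import Mathlib

noncomputable section

open MeasureTheory Complex

abbrev R2 : Type := EuclideanSpace ℝ (Fin 2)

/-- Partial derivative of a complex-valued function in coordinate direction `j`. -/
def pdC (j : Fin 2) (f : R2 → ℂ) (x : R2) : ℂ :=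
  fderiv ℝ f x (EuclideanSpace.single j 1)

/-- The operator `D_j = -i ∂_j` acting on complex-valued functions. -/
def Dop (j : Fin 2) (f : R2 → ℂ) (x : R2) : ℂ := -Complex.I * pdC j f x

/-- Partial derivative of a real-valued function in coordinate direction `j`. -/
def pdR (j : Fin 2) (f : R2 → ℝ) (x : R2) : ℝ :=
  fderiv ℝ f x (EuclideanSpace.single j 1)

/-- The Laplacian of a real-valued function. -/
def lapR (f : R2 → ℝ) (x : R2) : ℝ := pdR 0 (pdR 0 f) x + pdR 1 (pdR 1 f) x

/-- `A u = (D₁/2 - (∂₂ φ)/2) u`. -/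
def opA (φ : R2 → ℝ) (u : R2 → ℂ) (x : R2) : ℂ :=
  Dop 0 u x / 2 - ((pdR 1 φ x / 2 : ℝ) : ℂ) * u x

/-- `B u = (D₂/2 + (∂₁ φ)/2) u`. -/
def opB (φ : R2 → ℝ) (u : R2 → ℂ) (x : R2) : ℂ :=
  Dop 1 u x / 2 + ((pdR 0 φ x / 2 : ℝ) : ℂ) * u x

/-- `P u = A²u + B²u - (Δφ/4) u - λ² u`. -/
def opP (φ : R2 → ℝ) (l : ℝ) (u : R2 → ℂ) (x : R2) : ℂ :=
  opA φ (opA φ u) x + opB φ (opB φ u) x - ((lapR φ x / 4 : ℝ) : ℂ) * u x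
    - ((l : ℂ)) ^ 2 * u x

lemma contDiff_pdR {f : R2 → ℝ} (hf : ContDiff ℝ (⊤ : ℕ∞) f) (j : Fin 2) :
    ContDiff ℝ (⊤ : ℕ∞) (pdR j f) :=
  (hf.fderiv_right (by simp)).clm_apply contDiff_const

lemma norm_iteratedFDeriv_pdR_le {f : R2 → ℝ} (hf : ContDiff ℝ (⊤ : ℕ∞) f) (j : Fin 2) (n : ℕ)
    (x : R2) : ‖iteratedFDeriv ℝ n (pdR j f) x‖ ≤ ‖iteratedFDeriv ℝ (n + 1) f x‖ := by
  have h1 : pdR j f =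
      (ContinuousLinearMap.apply ℝ ℝ (EuclideanSpace.single j 1)) ∘ (fderiv ℝ f) := rfl
  rw [h1, ContinuousLinearMap.iteratedFDeriv_comp_left _ (hf.fderiv_right (m := ((⊤ : ℕ∞) : WithTop ℕ∞)) (by simp)).contDiffAt (by exact_mod_cast (le_top : (n : ℕ∞) ≤ ⊤))]
  calc ‖(ContinuousLinearMap.apply ℝ ℝ (EuclideanSpace.single j 1)).compContinuousMultilinearMap
        (iteratedFDeriv ℝ n (fderiv ℝ f) x)‖
      ≤ ‖ContinuousLinearMap.apply ℝ ℝ (EuclideanSpace.single j (1:ℝ))‖ *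
        ‖iteratedFDeriv ℝ n (fderiv ℝ f) x‖ :=
        ContinuousLinearMap.norm_compContinuousMultilinearMap_le _ _
    _ ≤ 1 * ‖iteratedFDeriv ℝ n (fderiv ℝ f) x‖ := by
        apply mul_le_mul_of_nonneg_right _ (norm_nonneg _)
        apply ContinuousLinearMap.opNorm_le_bound _ zero_le_one
        intro L
        have := L.le_opNorm (EuclideanSpace.single j (1:ℝ))
        simpa [EuclideanSpace.norm_single, mul_comm] using this
    _ = ‖iteratedFDeriv ℝ (n + 1) f x‖ := by rw [one_mul, norm_iteratedFDeriv_fderiv]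

lemma pdR_growth {f : R2 → ℝ} (hf : ContDiff ℝ (⊤ : ℕ∞) f) (j : Fin 2) {C : ℝ}
    (hbd : ∀ x, ‖iteratedFDeriv ℝ 2 f x‖ ≤ C) (x : R2) :
    ‖pdR j f x‖ ≤ (‖pdR j f 0‖ + C) * (1 + ‖x‖) := by
  have hC : 0 ≤ C := le_trans (norm_nonneg _) (hbd 0)
  have hdiff : ∀ y ∈ (Set.univ : Set R2), DifferentiableAt ℝ (pdR j f) y := fun y _ =>
    ((contDiff_pdR hf j).differentiable (by simp)) y
  have hb : ∀ y ∈ (Set.univ : Set R2), ‖fderiv ℝ (pdR j f) y‖ ≤ C := by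
    intro y _
    have h0 : ‖fderiv ℝ (pdR j f) y‖ = ‖iteratedFDeriv ℝ 1 (pdR j f) y‖ := by
      rw [← norm_iteratedFDeriv_fderiv, norm_iteratedFDeriv_zero]
    rw [h0]
    exact (norm_iteratedFDeriv_pdR_le hf j 1 y).trans (hbd y)
  have := convex_univ.norm_image_sub_le_of_norm_fderiv_le hdiff hb (Set.mem_univ (0:R2))
    (Set.mem_univ x)
  have hx : ‖pdR j f x‖ ≤ ‖pdR j f 0‖ + C * ‖x‖ := by
    have h2 : ‖pdR j f x - pdR j f 0‖ ≤ C * ‖x - 0‖ := this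
    rw [sub_zero] at h2
    calc ‖pdR j f x‖ = ‖pdR j f 0 + (pdR j f x - pdR j f 0)‖ := by ring_nf
      _ ≤ ‖pdR j f 0‖ + ‖pdR j f x - pdR j f 0‖ := norm_add_le _ _
      _ ≤ ‖pdR j f 0‖ + C * ‖x‖ := by linarith
  nlinarith [norm_nonneg x, norm_nonneg (pdR j f 0)]

lemma tg_ofReal {g : R2 → ℝ} (hg : ContDiff ℝ (⊤ : ℕ∞) g) {a : ℝ} (h0 : ∀ x, ‖g x‖ ≤ a * (1 + ‖x‖))
    (hbd : ∀ n : ℕ, 1 ≤ n → ∃ C, ∀ x, ‖iteratedFDeriv ℝ n g x‖ ≤ C) :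
    Function.HasTemperateGrowth (fun x : R2 => ((g x : ℝ) : ℂ)) := by
  have hsm : ContDiff ℝ (⊤ : ℕ∞) (fun x : R2 => ((g x : ℝ) : ℂ)) :=
    Complex.ofRealCLM.contDiff.comp hg
  refine ⟨hsm.of_le (by simp), fun n => ?_⟩
  have hnorm : ∀ x, ‖iteratedFDeriv ℝ n (fun x : R2 => ((g x : ℝ) : ℂ)) x‖
      = ‖iteratedFDeriv ℝ n g x‖ := by
    intro x
    have : (fun x : R2 => ((g x : ℝ) : ℂ)) = (Complex.ofRealLI : ℝ →ₗᵢ[ℝ] ℂ) ∘ g := rfl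
    rw [this, LinearIsometry.norm_iteratedFDeriv_comp_left _ hg.contDiffAt (by exact_mod_cast (le_top : (n : ℕ∞) ≤ ⊤))]
  rcases Nat.eq_zero_or_pos n with hn | hn
  · subst hn
    refine ⟨1, a, fun x => ?_⟩
    rw [hnorm, norm_iteratedFDeriv_zero, pow_one]
    exact h0 x
  · obtain ⟨C, hC⟩ := hbd n hn
    refine ⟨0, C, fun x => ?_⟩
    rw [hnorm, pow_zero, mul_one]
    exact hC x

section schwartzops

open SchwartzMap

variable {φ : R2 → ℝ}

/-- multiplication by a temperate-growth function, as a map on Schwartz space -/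
def mulS {g : R2 → ℂ} (hg : Function.HasTemperateGrowth g) (u : 𝓢(R2, ℂ)) : 𝓢(R2, ℂ) :=
  SchwartzMap.bilinLeftCLM (ContinuousLinearMap.mul ℝ ℂ) hg u

@[simp] lemma mulS_apply {g : R2 → ℂ} (hg : Function.HasTemperateGrowth g) (u : 𝓢(R2, ℂ))
    (x : R2) : mulS hg u x = u x * g x := rfl

/-- `A` as a map on Schwartz space -/
def aS (hg : Function.HasTemperateGrowth (fun x : R2 => ((pdR 1 φ x : ℝ) : ℂ)))
    (u : 𝓢(R2, ℂ)) : 𝓢(R2, ℂ) :=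
  (-(Complex.I/2)) • (LineDeriv.lineDerivOpCLM ℝ 𝓢(R2, ℂ) (EuclideanSpace.single (0 : Fin 2) (1 : ℝ)) u)
    - (2⁻¹ : ℂ) • mulS hg u

lemma aS_apply (hg : Function.HasTemperateGrowth (fun x : R2 => ((pdR 1 φ x : ℝ) : ℂ)))
    (u : 𝓢(R2, ℂ)) (x : R2) : aS hg u x = opA φ (⇑u) x := by
  simp only [aS, SchwartzMap.sub_apply, SchwartzMap.smul_apply, LineDeriv.lineDerivOpCLM_apply, lineDerivOp_apply_eq_fderiv, mulS_apply, smul_eq_mul]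
  unfold opA Dop pdC
  push_cast
  ring

lemma aS_coe (hg : Function.HasTemperateGrowth (fun x : R2 => ((pdR 1 φ x : ℝ) : ℂ)))
    (u : 𝓢(R2, ℂ)) : ⇑(aS hg u) = opA φ (⇑u) := funext (aS_apply hg u)

/-- `B` as a map on Schwartz space -/
def bS (hg : Function.HasTemperateGrowth (fun x : R2 => ((pdR 0 φ x : ℝ) : ℂ)))
    (u : 𝓢(R2, ℂ)) : 𝓢(R2, ℂ) :=
  (-(Complex.I/2)) • (LineDeriv.lineDerivOpCLM ℝ 𝓢(R2, ℂ) (EuclideanSpace.single (1 : Fin 2) (1 : ℝ)) u)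
    + (2⁻¹ : ℂ) • mulS hg u

lemma bS_apply (hg : Function.HasTemperateGrowth (fun x : R2 => ((pdR 0 φ x : ℝ) : ℂ)))
    (u : 𝓢(R2, ℂ)) (x : R2) : bS hg u x = opB φ (⇑u) x := by
  simp only [bS, SchwartzMap.add_apply, SchwartzMap.smul_apply, LineDeriv.lineDerivOpCLM_apply, lineDerivOp_apply_eq_fderiv, mulS_apply, smul_eq_mul]
  unfold opB Dop pdC
  push_cast
  ring

lemma bS_coe (hg : Function.HasTemperateGrowth (fun x : R2 => ((pdR 0 φ x : ℝ) : ℂ)))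
    (u : 𝓢(R2, ℂ)) : ⇑(bS hg u) = opB φ (⇑u) := funext (bS_apply hg u)

/-- a Schwartz function is bounded -/
lemma schwartz_bdd (w : 𝓢(R2, ℂ)) : ∃ C, ∀ x, ‖w x‖ ≤ C := by
  refine ⟨SchwartzMap.seminorm ℝ 0 0 w, fun x => ?_⟩
  have := SchwartzMap.norm_iteratedFDeriv_le_seminorm ℝ w 0 x
  simpa [norm_iteratedFDeriv_zero] using this

/-- Schwartz times bounded measurable is integrable -/
lemma integrable_schwartz_mul_bdd (w : 𝓢(R2, ℂ)) {b : R2 → ℂ}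
    (hb : AEStronglyMeasurable b (volume : Measure R2)) (hbd : ∃ C, ∀ x, ‖b x‖ ≤ C) :
    Integrable (fun x => w x * b x) (volume : Measure R2) := by
  have h := (w.integrable (μ := (volume : Measure R2))).bdd_mul (c := hbd.choose) hb (Filter.Eventually.of_forall hbd.choose_spec)
  exact h.congr (Filter.Eventually.of_forall (fun x => mul_comm _ _))

lemma conj_bdd (w : 𝓢(R2, ℂ)) : ∃ C, ∀ x, ‖(starRingEnd ℂ) (w x)‖ ≤ C := by
  obtain ⟨C, hC⟩ := schwartz_bdd w
  exact ⟨C, fun x => by simpa using hC x⟩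

lemma conj_meas (w : 𝓢(R2, ℂ)) :
    AEStronglyMeasurable (fun x => (starRingEnd ℂ) (w x)) (volume : Measure R2) :=
  (Complex.continuous_conj.comp w.continuous).aestronglyMeasurable

/-- conj commutes with pdC for differentiable functions -/
lemma pdC_conj (j : Fin 2) {g : R2 → ℂ} (hg : Differentiable ℝ g) (x : R2) :
    pdC j (fun y => (starRingEnd ℂ) (g y)) x = (starRingEnd ℂ) (pdC j g x) := by
  unfold pdC
  have : (fun y => (starRingEnd ℂ) (g y)) = ⇑(Complex.conjCLE.toContinuousLinearMap) ∘ g := rfl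
  rw [this]
  rw [(Complex.conjCLE.toContinuousLinearMap.hasFDerivAt.comp x
    (hg x).hasFDerivAt).fderiv]
  rfl

/-- integration by parts on Schwartz space -/
lemma ibp_schwartz (j : Fin 2) (f g : 𝓢(R2, ℂ)) :
    ∫ x, pdC j (⇑f) x * (starRingEnd ℂ) (g x) =
      - ∫ x, f x * (starRingEnd ℂ) (pdC j (⇑g) x) := by
  classical
  set v := EuclideanSpace.single j (1 : ℝ) with hv
  set h : R2 → ℂ := fun y => (starRingEnd ℂ) (g y) with hh
  have hconjdiff : Differentiable ℝ h :=
    Complex.conjCLE.toContinuousLinearMap.differentiable.comp g.differentiable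
  have h1 : ∀ x : R2, fderiv ℝ h x v = (starRingEnd ℂ) (pdC j (⇑g) x) := fun x =>
    pdC_conj j g.differentiable x
  have int1 : Integrable (fun x => fderiv ℝ (⇑f) x v * h x) (volume : Measure R2) := by
    have heq : (fun x => fderiv ℝ (⇑f) x v * h x)
        = fun x => (LineDeriv.lineDerivOpCLM ℝ 𝓢(R2, ℂ) v f) x * (starRingEnd ℂ) (g x) := by
      funext x; rw [LineDeriv.lineDerivOpCLM_apply, SchwartzMap.lineDerivOp_apply_eq_fderiv]
    rw [heq]
    exact integrable_schwartz_mul_bdd _ (conj_meas g) (conj_bdd g)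
  have int2 : Integrable (fun x => f x * fderiv ℝ h x v) (volume : Measure R2) := by
    have heq : (fun x => f x * fderiv ℝ h x v)
        = fun x => f x * (starRingEnd ℂ) ((LineDeriv.lineDerivOpCLM ℝ 𝓢(R2, ℂ) v g) x) := by
      funext x; rw [h1 x]; rfl
    rw [heq]
    exact integrable_schwartz_mul_bdd f
      ((Complex.continuous_conj.comp (LineDeriv.lineDerivOpCLM ℝ 𝓢(R2, ℂ) v g).continuous).aestronglyMeasurable)
      (conj_bdd (LineDeriv.lineDerivOpCLM ℝ 𝓢(R2, ℂ) v g))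
  have int3 : Integrable (fun x => f x * h x) (volume : Measure R2) :=
    integrable_schwartz_mul_bdd f (conj_meas g) (conj_bdd g)
  have key := integral_mul_fderiv_eq_neg_fderiv_mul_of_integrable
    (μ := (volume : Measure R2)) (f := ⇑f) (g := h) (v := v) int1 int2 int3
    (fun x _ => f.differentiableAt) (fun x _ => hconjdiff x)
  -- key : ∫ f x * fderiv h x v = - ∫ fderiv f x v * h x
  have e1 : ∫ x, pdC j (⇑f) x * (starRingEnd ℂ) (g x) = ∫ x, fderiv ℝ (⇑f) x v * h x := rfl
  have e2 : ∫ x, f x * (starRingEnd ℂ) (pdC j (⇑g) x) = ∫ x, f x * fderiv ℝ h x v := by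
    apply integral_congr_ae
    refine Filter.Eventually.of_forall fun x => ?_
    show f x * (starRingEnd ℂ) (pdC j (⇑g) x) = f x * fderiv ℝ h x v
    rw [h1 x]
  rw [e1, e2, key, neg_neg]

end schwartzops

section symm

open SchwartzMap

variable {φ : R2 → ℝ}

lemma integrable_pdC_mul_conj (j : Fin 2) (f g : 𝓢(R2, ℂ)) :
    Integrable (fun x => pdC j (⇑f) x * (starRingEnd ℂ) (g x)) (volume : Measure R2) := by
  have heq : (fun x => pdC j (⇑f) x * (starRingEnd ℂ) (g x))
      = fun x => (LineDeriv.lineDerivOpCLM ℝ 𝓢(R2, ℂ) (EuclideanSpace.single j (1:ℝ)) f) x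
          * (starRingEnd ℂ) (g x) := by
    funext x; rw [LineDeriv.lineDerivOpCLM_apply, SchwartzMap.lineDerivOp_apply_eq_fderiv]; rfl
  rw [heq]
  exact integrable_schwartz_mul_bdd _ (conj_meas g) (conj_bdd g)

lemma integrable_mul_conj_pdC (j : Fin 2) (f g : 𝓢(R2, ℂ)) :
    Integrable (fun x => f x * (starRingEnd ℂ) (pdC j (⇑g) x)) (volume : Measure R2) := by
  have heq : (fun x => f x * (starRingEnd ℂ) (pdC j (⇑g) x))
      = fun x => f x * (starRingEnd ℂ)
          ((LineDeriv.lineDerivOpCLM ℝ 𝓢(R2, ℂ) (EuclideanSpace.single j (1:ℝ)) g) x) := by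
    funext x; rw [LineDeriv.lineDerivOpCLM_apply, SchwartzMap.lineDerivOp_apply_eq_fderiv]; rfl
  rw [heq]
  exact integrable_schwartz_mul_bdd f
    ((Complex.continuous_conj.comp (LineDeriv.lineDerivOpCLM ℝ 𝓢(R2, ℂ) (EuclideanSpace.single j (1:ℝ)) g).continuous).aestronglyMeasurable)
    (conj_bdd _)

lemma symm_opA (hg : Function.HasTemperateGrowth (fun x : R2 => ((pdR 1 φ x : ℝ) : ℂ)))
    (f g : 𝓢(R2, ℂ)) :
    ∫ x, opA φ (⇑f) x * (starRingEnd ℂ) (g x)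
      = ∫ x, f x * (starRingEnd ℂ) (opA φ (⇑g) x) := by
  have hL : (fun x => opA φ (⇑f) x * (starRingEnd ℂ) (g x))
      = fun x => (-(Complex.I/2)) * (pdC 0 (⇑f) x * (starRingEnd ℂ) (g x))
          + (-(2⁻¹ : ℂ)) * ((mulS hg f) x * (starRingEnd ℂ) (g x)) := by
    funext x
    simp only [mulS_apply]
    unfold opA Dop
    push_cast
    ring
  have hR : (fun x => f x * (starRingEnd ℂ) (opA φ (⇑g) x))
      = fun x => ((Complex.I/2)) * (f x * (starRingEnd ℂ) (pdC 0 (⇑g) x))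
          + (-(2⁻¹ : ℂ)) * (f x * (starRingEnd ℂ) ((mulS hg g) x)) := by
    funext x
    simp only [mulS_apply]
    unfold opA Dop
    simp only [map_sub, map_mul, map_div₀, map_neg, Complex.conj_I, Complex.conj_ofReal,
      map_ofNat]
    push_cast
    ring
  have intT : Integrable (fun x => pdC 0 (⇑f) x * (starRingEnd ℂ) (g x))
      (volume : Measure R2) := integrable_pdC_mul_conj 0 f g
  have intS : Integrable (fun x => (mulS hg f) x * (starRingEnd ℂ) (g x))
      (volume : Measure R2) := integrable_schwartz_mul_bdd _ (conj_meas g) (conj_bdd g)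
  have intT' : Integrable (fun x => f x * (starRingEnd ℂ) (pdC 0 (⇑g) x))
      (volume : Measure R2) := integrable_mul_conj_pdC 0 f g
  have intS' : Integrable (fun x => f x * (starRingEnd ℂ) ((mulS hg g) x))
      (volume : Measure R2) :=
    integrable_schwartz_mul_bdd f
      ((Complex.continuous_conj.comp (mulS hg g).continuous).aestronglyMeasurable)
      (conj_bdd _)
  have hS : ∫ x, (mulS hg f) x * (starRingEnd ℂ) (g x)
      = ∫ x, f x * (starRingEnd ℂ) ((mulS hg g) x) := by
    apply integral_congr_ae
    refine Filter.Eventually.of_forall fun x => ?_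
    show (mulS hg f) x * (starRingEnd ℂ) (g x) = f x * (starRingEnd ℂ) ((mulS hg g) x)
    simp only [mulS_apply, map_mul, Complex.conj_ofReal]
    ring
  have hT := ibp_schwartz 0 f g
  rw [hL, hR, integral_add (intT.const_mul _) (intS.const_mul _),
    integral_add (intT'.const_mul _) (intS'.const_mul _), integral_const_mul, integral_const_mul,
    integral_const_mul, integral_const_mul, hS, hT]
  ring

lemma symm_opB (hg : Function.HasTemperateGrowth (fun x : R2 => ((pdR 0 φ x : ℝ) : ℂ)))
    (f g : 𝓢(R2, ℂ)) :
    ∫ x, opB φ (⇑f) x * (starRingEnd ℂ) (g x)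
      = ∫ x, f x * (starRingEnd ℂ) (opB φ (⇑g) x) := by
  have hL : (fun x => opB φ (⇑f) x * (starRingEnd ℂ) (g x))
      = fun x => (-(Complex.I/2)) * (pdC 1 (⇑f) x * (starRingEnd ℂ) (g x))
          + ((2⁻¹ : ℂ)) * ((mulS hg f) x * (starRingEnd ℂ) (g x)) := by
    funext x
    simp only [mulS_apply]
    unfold opB Dop
    push_cast
    ring
  have hR : (fun x => f x * (starRingEnd ℂ) (opB φ (⇑g) x))
      = fun x => ((Complex.I/2)) * (f x * (starRingEnd ℂ) (pdC 1 (⇑g) x))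
          + ((2⁻¹ : ℂ)) * (f x * (starRingEnd ℂ) ((mulS hg g) x)) := by
    funext x
    simp only [mulS_apply]
    unfold opB Dop
    simp only [map_add, map_mul, map_div₀, map_neg, Complex.conj_I, Complex.conj_ofReal,
      map_ofNat]
    push_cast
    ring
  have intT : Integrable (fun x => pdC 1 (⇑f) x * (starRingEnd ℂ) (g x))
      (volume : Measure R2) := integrable_pdC_mul_conj 1 f g
  have intS : Integrable (fun x => (mulS hg f) x * (starRingEnd ℂ) (g x))
      (volume : Measure R2) := integrable_schwartz_mul_bdd _ (conj_meas g) (conj_bdd g)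
  have intT' : Integrable (fun x => f x * (starRingEnd ℂ) (pdC 1 (⇑g) x))
      (volume : Measure R2) := integrable_mul_conj_pdC 1 f g
  have intS' : Integrable (fun x => f x * (starRingEnd ℂ) ((mulS hg g) x))
      (volume : Measure R2) :=
    integrable_schwartz_mul_bdd f
      ((Complex.continuous_conj.comp (mulS hg g).continuous).aestronglyMeasurable)
      (conj_bdd _)
  have hS : ∫ x, (mulS hg f) x * (starRingEnd ℂ) (g x)
      = ∫ x, f x * (starRingEnd ℂ) ((mulS hg g) x) := by
    apply integral_congr_ae
    refine Filter.Eventually.of_forall fun x => ?_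
    show (mulS hg f) x * (starRingEnd ℂ) (g x) = f x * (starRingEnd ℂ) ((mulS hg g) x)
    simp only [mulS_apply, map_mul, Complex.conj_ofReal]
    ring
  have hT := ibp_schwartz 1 f g
  rw [hL, hR, integral_add (intT.const_mul _) (intS.const_mul _),
    integral_add (intT'.const_mul _) (intS'.const_mul _), integral_const_mul, integral_const_mul,
    integral_const_mul, integral_const_mul, hS, hT]
  ring

end symm

section energy

open SchwartzMap

variable {φ : R2 → ℝ}

lemma integrable_normsq (w : 𝓢(R2, ℂ)) :
    Integrable (fun x => ‖w x‖ ^ 2) (volume : Measure R2) := by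
  have h : Integrable (fun x => ‖w x‖ * ‖w x‖) (volume : Measure R2) := by
    obtain ⟨C, hC⟩ := schwartz_bdd w
    refine (w.integrable.norm).bdd_mul (c := C) (w.continuous.norm.aestronglyMeasurable) ?_
    exact Filter.Eventually.of_forall fun x => by simpa using hC x
  exact h.congr (Filter.Eventually.of_forall fun x => (sq ‖w x‖).symm)

lemma integral_mul_conj_self (w : R2 → ℂ)
    (hw : Integrable (fun x => ‖w x‖ ^ 2) (volume : Measure R2)) :
    ∫ x, w x * (starRingEnd ℂ) (w x) = (((∫ x, ‖w x‖ ^ 2 : ℝ)) : ℂ) := by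
  have h := Complex.ofRealCLM.integral_comp_comm hw
  have h2 : ∀ x : R2, w x * (starRingEnd ℂ) (w x)
      = Complex.ofRealCLM (‖w x‖ ^ 2) := by
    intro x
    simp only [Complex.ofRealCLM_apply]
    rw [Complex.mul_conj]
    norm_cast
    rw [Complex.normSq_eq_norm_sq]
  calc ∫ x, w x * (starRingEnd ℂ) (w x) = ∫ x, Complex.ofRealCLM (‖w x‖ ^ 2) :=
        integral_congr_ae (Filter.Eventually.of_forall fun x => h2 x)
    _ = Complex.ofRealCLM (∫ x, ‖w x‖ ^ 2) := h
    _ = (((∫ x, ‖w x‖ ^ 2 : ℝ)) : ℂ) := rfl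

lemma pd2_bound (hφs : ContDiff ℝ (⊤ : ℕ∞) φ) {C2 : ℝ}
    (hC2 : ∀ x, ‖iteratedFDeriv ℝ 2 φ x‖ ≤ C2) (j : Fin 2) (x : R2) :
    ‖pdR j (pdR j φ) x‖ ≤ C2 := by
  have h0 : ‖pdR j (pdR j φ) x‖ = ‖iteratedFDeriv ℝ 0 (pdR j (pdR j φ)) x‖ :=
    (norm_iteratedFDeriv_zero).symm
  rw [h0]
  calc ‖iteratedFDeriv ℝ 0 (pdR j (pdR j φ)) x‖
      ≤ ‖iteratedFDeriv ℝ 1 (pdR j φ) x‖ := norm_iteratedFDeriv_pdR_le (contDiff_pdR hφs j) j 0 x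
    _ ≤ ‖iteratedFDeriv ℝ 2 φ x‖ := norm_iteratedFDeriv_pdR_le hφs j 1 x
    _ ≤ C2 := hC2 x

lemma lap_abs (hφs : ContDiff ℝ (⊤ : ℕ∞) φ) {C2 : ℝ}
    (hC2 : ∀ x, ‖iteratedFDeriv ℝ 2 φ x‖ ≤ C2) (x : R2) : |lapR φ x| ≤ 2 * C2 := by
  have h0 := pd2_bound hφs hC2 0 x
  have h1 := pd2_bound hφs hC2 1 x
  rw [Real.norm_eq_abs] at h0 h1
  unfold lapR
  calc |pdR 0 (pdR 0 φ) x + pdR 1 (pdR 1 φ) x|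
      ≤ |pdR 0 (pdR 0 φ) x| + |pdR 1 (pdR 1 φ) x| := abs_add_le _ _
    _ ≤ 2 * C2 := by linarith

lemma lapC_norm_bound (hφs : ContDiff ℝ (⊤ : ℕ∞) φ) {C2 : ℝ}
    (hC2 : ∀ x, ‖iteratedFDeriv ℝ 2 φ x‖ ≤ C2) (x : R2) :
    ‖((lapR φ x / 4 : ℝ) : ℂ)‖ ≤ C2 / 2 := by
  have h := lap_abs hφs hC2 x
  rw [Complex.norm_real, Real.norm_eq_abs, abs_div]
  have : |(4:ℝ)| = 4 := by norm_num
  rw [this]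
  linarith

lemma energy_est (hφs : ContDiff ℝ (⊤ : ℕ∞) φ)
    (hgA : Function.HasTemperateGrowth (fun x : R2 => ((pdR 1 φ x : ℝ) : ℂ)))
    (hgB : Function.HasTemperateGrowth (fun x : R2 => ((pdR 0 φ x : ℝ) : ℂ)))
    {C2 : ℝ} (hC2 : ∀ x, ‖iteratedFDeriv ℝ 2 φ x‖ ≤ C2)
    {l : ℝ} (u : 𝓢(R2, ℂ)) (hPu : ∀ x, opP φ l (⇑u) x = 0) :
    (∫ x, ‖opA φ (⇑u) x‖ ^ 2) ≤ (C2 / 2 + l ^ 2) * ∫ x, ‖u x‖ ^ 2 ∧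
    (∫ x, ‖opB φ (⇑u) x‖ ^ 2) ≤ (C2 / 2 + l ^ 2) * ∫ x, ‖u x‖ ^ 2 := by
  have hA1 : ⇑(aS hgA u) = opA φ (⇑u) := aS_coe hgA u
  have hB1 : ⇑(bS hgB u) = opB φ (⇑u) := bS_coe hgB u
  have hA2 : ⇑(aS hgA (aS hgA u)) = opA φ (opA φ (⇑u)) := by rw [aS_coe, hA1]
  have hB2 : ⇑(bS hgB (bS hgB u)) = opB φ (opB φ (⇑u)) := by rw [bS_coe, hB1]
  have intnormsqA : Integrable (fun x => ‖opA φ (⇑u) x‖ ^ 2) (volume : Measure R2) := by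
    rw [← hA1]; exact integrable_normsq _
  have intnormsqB : Integrable (fun x => ‖opB φ (⇑u) x‖ ^ 2) (volume : Measure R2) := by
    rw [← hB1]; exact integrable_normsq _
  have intnormsq : Integrable (fun x => ‖u x‖ ^ 2) (volume : Measure R2) := integrable_normsq u
  -- pointwise identity from P u = 0
  have hpt : ∀ x, opA φ (opA φ (⇑u)) x * (starRingEnd ℂ) (u x)
      + opB φ (opB φ (⇑u)) x * (starRingEnd ℂ) (u x)
      = ((lapR φ x / 4 : ℝ) : ℂ) * (u x * (starRingEnd ℂ) (u x))
        + ((l : ℂ)) ^ 2 * (u x * (starRingEnd ℂ) (u x)) := by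
    intro x
    have h0 := hPu x
    unfold opP at h0
    linear_combination (starRingEnd ℂ) (u x) * h0
  -- integrabilities
  have intA2 : Integrable (fun x => opA φ (opA φ (⇑u)) x * (starRingEnd ℂ) (u x))
      (volume : Measure R2) := by
    rw [← hA2]; exact integrable_schwartz_mul_bdd _ (conj_meas u) (conj_bdd u)
  have intB2 : Integrable (fun x => opB φ (opB φ (⇑u)) x * (starRingEnd ℂ) (u x))
      (volume : Measure R2) := by
    rw [← hB2]; exact integrable_schwartz_mul_bdd _ (conj_meas u) (conj_bdd u)
  have intuu : Integrable (fun x => u x * (starRingEnd ℂ) (u x)) (volume : Measure R2) :=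
    integrable_schwartz_mul_bdd u (conj_meas u) (conj_bdd u)
  have hlapcont : Continuous (fun x => ((lapR φ x / 4 : ℝ) : ℂ)) := by
    have h0 : Continuous (pdR 0 (pdR 0 φ)) := (contDiff_pdR (contDiff_pdR hφs 0) 0).continuous
    have h1 : Continuous (pdR 1 (pdR 1 φ)) := (contDiff_pdR (contDiff_pdR hφs 1) 1).continuous
    exact Complex.continuous_ofReal.comp (((h0.add h1).div_const 4))
  have intV : Integrable (fun x => ((lapR φ x / 4 : ℝ) : ℂ) * (u x * (starRingEnd ℂ) (u x)))
      (volume : Measure R2) :=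
    intuu.bdd_mul (c := C2 / 2) hlapcont.aestronglyMeasurable (Filter.Eventually.of_forall fun x => lapC_norm_bound hφs hC2 x)
  have intl : Integrable (fun x => ((l : ℂ)) ^ 2 * (u x * (starRingEnd ℂ) (u x)))
      (volume : Measure R2) := intuu.const_mul _
  -- integrate the pointwise identity
  have hint : (∫ x, opA φ (opA φ (⇑u)) x * (starRingEnd ℂ) (u x))
      + (∫ x, opB φ (opB φ (⇑u)) x * (starRingEnd ℂ) (u x))
      = (∫ x, ((lapR φ x / 4 : ℝ) : ℂ) * (u x * (starRingEnd ℂ) (u x)))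
        + (∫ x, ((l : ℂ)) ^ 2 * (u x * (starRingEnd ℂ) (u x))) := by
    rw [← integral_add intA2 intB2, ← integral_add intV intl]
    exact integral_congr_ae (Filter.Eventually.of_forall fun x => hpt x)
  -- rewrite LHS using symmetry
  have hsymA : (∫ x, opA φ (opA φ (⇑u)) x * (starRingEnd ℂ) (u x))
      = (((∫ x, ‖opA φ (⇑u) x‖ ^ 2 : ℝ)) : ℂ) := by
    have h := symm_opA hgA (aS hgA u) u
    rw [hA1] at h
    exact h.trans (integral_mul_conj_self _ intnormsqA)
  have hsymB : (∫ x, opB φ (opB φ (⇑u)) x * (starRingEnd ℂ) (u x))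
      = (((∫ x, ‖opB φ (⇑u) x‖ ^ 2 : ℝ)) : ℂ) := by
    have h := symm_opB hgB (bS hgB u) u
    rw [hB1] at h
    exact h.trans (integral_mul_conj_self _ intnormsqB)
  -- rewrite RHS as real integrals
  have intVr : Integrable (fun x => (lapR φ x / 4) * ‖u x‖ ^ 2) (volume : Measure R2) := by
    refine intnormsq.bdd_mul (c := C2 / 2) ?_ (Filter.Eventually.of_forall fun x => ?_)
    · have h0 : Continuous (pdR 0 (pdR 0 φ)) := (contDiff_pdR (contDiff_pdR hφs 0) 0).continuous
      have h1 : Continuous (pdR 1 (pdR 1 φ)) := (contDiff_pdR (contDiff_pdR hφs 1) 1).continuous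
      exact ((h0.add h1).div_const 4).aestronglyMeasurable
    · have := lapC_norm_bound hφs hC2 x
      rwa [Complex.norm_real] at this
  have hRV : (∫ x, ((lapR φ x / 4 : ℝ) : ℂ) * (u x * (starRingEnd ℂ) (u x)))
      = (((∫ x, (lapR φ x / 4) * ‖u x‖ ^ 2 : ℝ)) : ℂ) := by
    have h := Complex.ofRealCLM.integral_comp_comm intVr
    have h2 : ∀ x : R2, ((lapR φ x / 4 : ℝ) : ℂ) * (u x * (starRingEnd ℂ) (u x))
        = Complex.ofRealCLM ((lapR φ x / 4) * ‖u x‖ ^ 2) := by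
      intro x
      simp only [Complex.ofRealCLM_apply]
      rw [Complex.mul_conj]
      push_cast
      congr 1
      norm_cast
      rw [Complex.normSq_eq_norm_sq]
    calc (∫ x, ((lapR φ x / 4 : ℝ) : ℂ) * (u x * (starRingEnd ℂ) (u x)))
        = ∫ x, Complex.ofRealCLM ((lapR φ x / 4) * ‖u x‖ ^ 2) :=
          integral_congr_ae (Filter.Eventually.of_forall fun x => h2 x)
      _ = Complex.ofRealCLM (∫ x, (lapR φ x / 4) * ‖u x‖ ^ 2) := h
      _ = (((∫ x, (lapR φ x / 4) * ‖u x‖ ^ 2 : ℝ)) : ℂ) := rfl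
  have hRl : (∫ x, ((l : ℂ)) ^ 2 * (u x * (starRingEnd ℂ) (u x)))
      = (((l ^ 2 * ∫ x, ‖u x‖ ^ 2 : ℝ)) : ℂ) := by
    rw [integral_const_mul, integral_mul_conj_self _ intnormsq]
    push_cast
    ring
  rw [hsymA, hsymB, hRV, hRl] at hint
  have hre : (∫ x, ‖opA φ (⇑u) x‖ ^ 2) + (∫ x, ‖opB φ (⇑u) x‖ ^ 2)
      = (∫ x, (lapR φ x / 4) * ‖u x‖ ^ 2) + l ^ 2 * ∫ x, ‖u x‖ ^ 2 := by
    exact_mod_cast hint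
  have hVbound : (∫ x, (lapR φ x / 4) * ‖u x‖ ^ 2) ≤ (C2 / 2) * ∫ x, ‖u x‖ ^ 2 := by
    rw [← integral_const_mul]
    apply integral_mono intVr (intnormsq.const_mul _)
    intro x
    have hb := lap_abs hφs hC2 x
    have hn : (0:ℝ) ≤ ‖u x‖ ^ 2 := sq_nonneg _
    have h2 := (abs_le.mp hb).2
    nlinarith
  have hApos : (0:ℝ) ≤ ∫ x, ‖opB φ (⇑u) x‖ ^ 2 :=
    integral_nonneg fun x => sq_nonneg _
  have hBpos : (0:ℝ) ≤ ∫ x, ‖opA φ (⇑u) x‖ ^ 2 :=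
    integral_nonneg fun x => sq_nonneg _
  constructor
  · nlinarith
  · nlinarith
end energy

section commutator

open SchwartzMap

lemma contDiff_pdC {c : R2 → ℂ} (hc : ContDiff ℝ (⊤ : ℕ∞) c) (j : Fin 2) :
    ContDiff ℝ (⊤ : ℕ∞) (pdC j c) :=
  (hc.fderiv_right (by simp)).clm_apply contDiff_const

lemma pdC_mul {c u : R2 → ℂ} {x : R2} (j : Fin 2) (hc : DifferentiableAt ℝ c x)
    (hu : DifferentiableAt ℝ u x) :
    pdC j (fun y => c y * u y) x = pdC j c x * u x + c x * pdC j u x := by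
  unfold pdC
  rw [fderiv_fun_mul hc hu]
  simp only [ContinuousLinearMap.add_apply, ContinuousLinearMap.smul_apply, smul_eq_mul]
  ring

lemma pdC_const_mul {f : R2 → ℂ} {x : R2} (j : Fin 2) (b : ℂ) (hf : DifferentiableAt ℝ f x) :
    pdC j (fun y => b * f y) x = b * pdC j f x := by
  unfold pdC
  rw [fderiv_const_mul hf b]
  rfl

lemma pdC_add {f g : R2 → ℂ} {x : R2} (j : Fin 2) (hf : DifferentiableAt ℝ f x)
    (hg : DifferentiableAt ℝ g x) :
    pdC j (fun y => f y + g y) x = pdC j f x + pdC j g x := by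
  unfold pdC
  rw [fderiv_fun_add hf hg]
  rfl

lemma opA_mul (φ : R2 → ℝ) {c u : R2 → ℂ} {x : R2} (hc : DifferentiableAt ℝ c x)
    (hu : DifferentiableAt ℝ u x) :
    opA φ (fun y => c y * u y) x
      = c x * opA φ u x + (-Complex.I) * pdC 0 c x / 2 * u x := by
  unfold opA Dop
  rw [pdC_mul 0 hc hu]
  ring

lemma opB_mul (φ : R2 → ℝ) {c u : R2 → ℂ} {x : R2} (hc : DifferentiableAt ℝ c x)
    (hu : DifferentiableAt ℝ u x) :
    opB φ (fun y => c y * u y) x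
      = c x * opB φ u x + (-Complex.I) * pdC 1 c x / 2 * u x := by
  unfold opB Dop
  rw [pdC_mul 1 hc hu]
  ring

lemma opA_add (φ : R2 → ℝ) {f g : R2 → ℂ} {x : R2} (hf : DifferentiableAt ℝ f x)
    (hg : DifferentiableAt ℝ g x) :
    opA φ (fun y => f y + g y) x = opA φ f x + opA φ g x := by
  unfold opA Dop
  rw [pdC_add 0 hf hg]
  ring

lemma opB_add (φ : R2 → ℝ) {f g : R2 → ℂ} {x : R2} (hf : DifferentiableAt ℝ f x)
    (hg : DifferentiableAt ℝ g x) :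
    opB φ (fun y => f y + g y) x = opB φ f x + opB φ g x := by
  unfold opB Dop
  rw [pdC_add 1 hf hg]
  ring

lemma comm_A (φ : R2 → ℝ) {c u : R2 → ℂ} (hc : ContDiff ℝ (⊤ : ℕ∞) c) (hu : Differentiable ℝ u)
    (hAu : Differentiable ℝ (opA φ u)) (x : R2) :
    opA φ (opA φ (fun y => c y * u y)) x
      = c x * opA φ (opA φ u) x + (-Complex.I) * pdC 0 c x * opA φ u x
        - pdC 0 (pdC 0 c) x / 4 * u x := by
  have hcd : Differentiable ℝ c := hc.differentiable (by simp)
  have hpd : Differentiable ℝ (pdC 0 c) := (contDiff_pdC hc 0).differentiable (by simp)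
  set m : R2 → ℂ := fun y => (-Complex.I) / 2 * pdC 0 c y with hm
  have hmd : Differentiable ℝ m := by rw [hm]; exact hpd.const_mul _
  have hinner : opA φ (fun y => c y * u y) = fun y => c y * opA φ u y + m y * u y :=
    funext fun y => by rw [opA_mul φ (hcd y) (hu y), hm]; ring
  rw [hinner, opA_add φ ((hcd.fun_mul hAu) x) ((hmd.fun_mul hu) x), opA_mul φ (hcd x) (hAu x),
    opA_mul φ (hmd x) (hu x)]
  have hpm : pdC 0 m x = (-Complex.I) / 2 * pdC 0 (pdC 0 c) x := by
    rw [hm]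
    exact pdC_const_mul 0 _ (hpd x)
  rw [hpm]
  ring_nf
  rw [Complex.I_sq]
  ring

lemma comm_B (φ : R2 → ℝ) {c u : R2 → ℂ} (hc : ContDiff ℝ (⊤ : ℕ∞) c) (hu : Differentiable ℝ u)
    (hBu : Differentiable ℝ (opB φ u)) (x : R2) :
    opB φ (opB φ (fun y => c y * u y)) x
      = c x * opB φ (opB φ u) x + (-Complex.I) * pdC 1 c x * opB φ u x
        - pdC 1 (pdC 1 c) x / 4 * u x := by
  have hcd : Differentiable ℝ c := hc.differentiable (by simp)
  have hpd : Differentiable ℝ (pdC 1 c) := (contDiff_pdC hc 1).differentiable (by simp)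
  set m : R2 → ℂ := fun y => (-Complex.I) / 2 * pdC 1 c y with hm
  have hmd : Differentiable ℝ m := by rw [hm]; exact hpd.const_mul _
  have hinner : opB φ (fun y => c y * u y) = fun y => c y * opB φ u y + m y * u y :=
    funext fun y => by rw [opB_mul φ (hcd y) (hu y), hm]; ring
  rw [hinner, opB_add φ ((hcd.fun_mul hBu) x) ((hmd.fun_mul hu) x), opB_mul φ (hcd x) (hBu x),
    opB_mul φ (hmd x) (hu x)]
  have hpm : pdC 1 m x = (-Complex.I) / 2 * pdC 1 (pdC 1 c) x := by
    rw [hm]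
    exact pdC_const_mul 1 _ (hpd x)
  rw [hpm]
  ring_nf
  rw [Complex.I_sq]
  ring

lemma comm_P {φ : R2 → ℝ} (l : ℝ)
    (hgA : Function.HasTemperateGrowth (fun x : R2 => ((pdR 1 φ x : ℝ) : ℂ)))
    (hgB : Function.HasTemperateGrowth (fun x : R2 => ((pdR 0 φ x : ℝ) : ℂ)))
    {c : R2 → ℂ} (hc : ContDiff ℝ (⊤ : ℕ∞) c) (u : 𝓢(R2, ℂ)) (x : R2) :
    opP φ l (fun y => c y * u y) x
      = c x * opP φ l (⇑u) x + (-Complex.I) * pdC 0 c x * opA φ (⇑u) x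
        + (-Complex.I) * pdC 1 c x * opB φ (⇑u) x
        - (pdC 0 (pdC 0 c) x + pdC 1 (pdC 1 c) x) / 4 * u x := by
  have hAu : Differentiable ℝ (opA φ (⇑u)) := by
    rw [← aS_coe hgA u]; exact (aS hgA u).differentiable
  have hBu : Differentiable ℝ (opB φ (⇑u)) := by
    rw [← bS_coe hgB u]; exact (bS hgB u).differentiable
  unfold opP
  rw [comm_A φ hc u.differentiable hAu x, comm_B φ hc u.differentiable hBu x]
  ring

end commutator

section final

open SchwartzMap

lemma eLpNorm_schwartz_eq (w : 𝓢(R2, ℂ)) :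
    eLpNorm (⇑w) 2 (volume : Measure R2)
      = ENNReal.ofReal ((∫ x, ‖w x‖ ^ 2) ^ (2⁻¹ : ℝ)) := by
  have hm : MemLp (⇑w) 2 (volume : Measure R2) :=
    (memLp_two_iff_integrable_sq_norm w.continuous.aestronglyMeasurable).2 (integrable_normsq w)
  rw [hm.eLpNorm_eq_integral_rpow_norm (by norm_num) (by norm_num)]
  have h2 : ((2 : ENNReal)).toReal = (2:ℝ) := by norm_num
  rw [h2]
  have h3 : (fun a : R2 => ‖w a‖ ^ (2:ℝ)) = fun a => ‖w a‖ ^ (2:ℕ) := funext fun a => by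
    rw [show (2:ℝ) = ((2:ℕ):ℝ) by norm_num, Real.rpow_natCast]
  rw [h3]

lemma eLpNorm_le_sqrt (w v : 𝓢(R2, ℂ)) {K : ℝ} (hK : 0 ≤ K)
    (h : (∫ x, ‖w x‖ ^ 2) ≤ K * ∫ x, ‖v x‖ ^ 2) :
    eLpNorm (⇑w) 2 (volume : Measure R2)
      ≤ ENNReal.ofReal (Real.sqrt K) * eLpNorm (⇑v) 2 (volume : Measure R2) := by
  rw [eLpNorm_schwartz_eq w, eLpNorm_schwartz_eq v, ← ENNReal.ofReal_mul (Real.sqrt_nonneg K)]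
  apply ENNReal.ofReal_le_ofReal
  have h0 : (0:ℝ) ≤ ∫ x, ‖w x‖ ^ 2 := integral_nonneg fun x => sq_nonneg _
  have h1 : (0:ℝ) ≤ ∫ x, ‖v x‖ ^ 2 := integral_nonneg fun x => sq_nonneg _
  calc (∫ x, ‖w x‖ ^ 2) ^ (2⁻¹:ℝ) ≤ (K * ∫ x, ‖v x‖ ^ 2) ^ (2⁻¹:ℝ) :=
      Real.rpow_le_rpow h0 h (by norm_num)
    _ = K ^ (2⁻¹:ℝ) * (∫ x, ‖v x‖ ^ 2) ^ (2⁻¹:ℝ) := Real.mul_rpow hK h1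
    _ = Real.sqrt K * (∫ x, ‖v x‖ ^ 2) ^ (2⁻¹:ℝ) := by
        rw [Real.sqrt_eq_rpow, one_div]

lemma const_mul_norm_eLpNorm {M : ℝ} (hM : 0 ≤ M) (f : R2 → ℂ) :
    eLpNorm (fun x => M * ‖f x‖) 2 (volume : Measure R2)
      = ENNReal.ofReal M * eLpNorm f 2 (volume : Measure R2) := by
  have h : (fun x => M * ‖f x‖) = M • (fun x : R2 => ‖f x‖) := rfl
  rw [h, eLpNorm_const_smul, eLpNorm_norm]
  congr 1
  exact Real.enorm_eq_ofReal hM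

lemma pdR_comp_sub {g : R2 → ℝ} (hg : Differentiable ℝ g) (j : Fin 2) (q x : R2) :
    pdR j (fun y => g (y - q)) x = pdR j g (x - q) := by
  unfold pdR
  have h1 : HasFDerivAt (fun y : R2 => y - q) (ContinuousLinearMap.id ℝ R2) x :=
    (hasFDerivAt_id x).sub_const q
  have h2 : HasFDerivAt (fun y : R2 => g (y - q)) (fderiv ℝ g (x - q)) x := by
    have := ((hg (x - q)).hasFDerivAt).comp x h1
    exact this
  rw [h2.fderiv]

lemma pdC_ofReal {g : R2 → ℝ} (hg : Differentiable ℝ g) (j : Fin 2) (x : R2) :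
    pdC j (fun y => ((g y : ℝ) : ℂ)) x = ((pdR j g x : ℝ) : ℂ) := by
  unfold pdC pdR
  have h : HasFDerivAt (fun y : R2 => ((g y : ℝ) : ℂ))
      (Complex.ofRealCLM.comp (fderiv ℝ g x)) x :=
    (Complex.ofRealCLM.hasFDerivAt).comp x (hg x).hasFDerivAt
  rw [h.fderiv]
  rfl

lemma pd_compact_supp {β : R2 → ℝ} (hc : HasCompactSupport β) (j : Fin 2) :
    HasCompactSupport (pdR j β) := by
  have h1 : pdR j β
      = (fun L : R2 →L[ℝ] ℝ => L (EuclideanSpace.single j 1)) ∘ fderiv ℝ β := rfl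
  rw [h1]
  exact (hc.fderiv (𝕜 := ℝ)).comp_left (by simp)

lemma pd_bound {β : R2 → ℝ} (hs : ContDiff ℝ (⊤ : ℕ∞) β) (hc : HasCompactSupport β) (j : Fin 2) :
    ∃ M, 0 ≤ M ∧ ∀ x, ‖pdR j β x‖ ≤ M := by
  obtain ⟨M, hM⟩ := (contDiff_pdR hs j).continuous.bounded_above_of_compact_support
    (pd_compact_supp hc j)
  exact ⟨M, le_trans (norm_nonneg _) (hM 0), hM⟩

end final


/-- For a cutoff `β ∈ C_c^∞`, eigenvalues `λ ∈ [0,Λ]`, and solutions of `P u = 0`,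
`‖P(β_q u)‖_{L²} ≤ C ‖u‖_{L²}` uniformly in `q`. -/
theorem stmt13 (φ : R2 → ℝ) (hφ_smooth : ContDiff ℝ (⊤ : ℕ∞) φ)
    (hφ_bd : ∀ n : ℕ, 2 ≤ n → ∃ C : ℝ, ∀ x : R2, ‖iteratedFDeriv ℝ n φ x‖ ≤ C)
    (β : R2 → ℝ) (hβ_smooth : ContDiff ℝ (⊤ : ℕ∞) β) (hβ_supp : HasCompactSupport β) :
    ∀ Λ : ℝ, 0 < Λ → ∃ C > 0, ∀ l ∈ Set.Icc (0 : ℝ) Λ, ∀ q : R2, ∀ u : SchwartzMap R2 ℂ,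
      (∀ x : R2, opP φ l (⇑u) x = 0) →
      eLpNorm (opP φ l (fun x => ((β (x - q) : ℝ) : ℂ) * u x)) 2 volume ≤
        ENNReal.ofReal C * eLpNorm (⇑u) 2 volume := by
  intro Λ hΛ
  obtain ⟨C2, hC2⟩ := hφ_bd 2 le_rfl
  have hC2nn : (0:ℝ) ≤ C2 := le_trans (norm_nonneg _) (hC2 0)
  have hgA : Function.HasTemperateGrowth (fun x : R2 => ((pdR 1 φ x : ℝ) : ℂ)) := by
    refine tg_ofReal (contDiff_pdR hφ_smooth 1) (a := ‖pdR 1 φ 0‖ + C2)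
      (fun x => pdR_growth hφ_smooth 1 hC2 x) (fun n hn => ?_)
    obtain ⟨C, hC⟩ := hφ_bd (n+1) (by omega)
    exact ⟨C, fun x => (norm_iteratedFDeriv_pdR_le hφ_smooth 1 n x).trans (hC x)⟩
  have hgB : Function.HasTemperateGrowth (fun x : R2 => ((pdR 0 φ x : ℝ) : ℂ)) := by
    refine tg_ofReal (contDiff_pdR hφ_smooth 0) (a := ‖pdR 0 φ 0‖ + C2)
      (fun x => pdR_growth hφ_smooth 0 hC2 x) (fun n hn => ?_)
    obtain ⟨C, hC⟩ := hφ_bd (n+1) (by omega)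
    exact ⟨C, fun x => (norm_iteratedFDeriv_pdR_le hφ_smooth 0 n x).trans (hC x)⟩
  obtain ⟨M0, hM0nn, hM0⟩ := pd_bound hβ_smooth hβ_supp 0
  obtain ⟨M1, hM1nn, hM1⟩ := pd_bound hβ_smooth hβ_supp 1
  obtain ⟨M00, hM00nn, hM00⟩ := pd_bound (contDiff_pdR hβ_smooth 0) (pd_compact_supp hβ_supp 0) 0
  obtain ⟨M11, hM11nn, hM11⟩ := pd_bound (contDiff_pdR hβ_smooth 1) (pd_compact_supp hβ_supp 1) 1
  set K := C2 / 2 + Λ ^ 2 with hKdef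
  have hKnn : 0 ≤ K := by rw [hKdef]; nlinarith
  have hsqnn := Real.sqrt_nonneg K
  refine ⟨(M0 + M1) * Real.sqrt K + (M00 + M11) / 4 + 1, ?_, ?_⟩
  · have h1 : 0 ≤ (M0 + M1) * Real.sqrt K := mul_nonneg (by linarith) hsqnn
    linarith
  intro l hl q u hPu
  have hβq : ContDiff ℝ (⊤ : ℕ∞) (fun y : R2 => β (y - q)) :=
    hβ_smooth.comp (contDiff_id.sub contDiff_const)
  have hcs : ContDiff ℝ (⊤ : ℕ∞) (fun y : R2 => ((β (y - q) : ℝ) : ℂ)) :=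
    Complex.ofRealCLM.contDiff.comp hβq
  have hβd : Differentiable ℝ β := hβ_smooth.differentiable (by simp)
  have hd1 : ∀ (j : Fin 2) (x : R2), pdC j (fun y : R2 => ((β (y - q) : ℝ) : ℂ)) x
      = ((pdR j β (x - q) : ℝ) : ℂ) := by
    intro j x
    rw [pdC_ofReal (hβq.differentiable (by simp)) j x, pdR_comp_sub hβd j q x]
  have hd2 : ∀ (j : Fin 2) (x : R2), pdC j (pdC j (fun y : R2 => ((β (y - q) : ℝ) : ℂ))) x
      = ((pdR j (pdR j β) (x - q) : ℝ) : ℂ) := by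
    intro j x
    have hfirst : pdC j (fun y : R2 => ((β (y - q) : ℝ) : ℂ))
        = fun y => ((pdR j β (y - q) : ℝ) : ℂ) := funext fun y => hd1 j y
    have hgd : Differentiable ℝ (fun y : R2 => pdR j β (y - q)) :=
      ((contDiff_pdR hβ_smooth j).differentiable (by simp)).comp (differentiable_id.sub_const q)
    rw [hfirst, pdC_ofReal hgd j x,
      pdR_comp_sub ((contDiff_pdR hβ_smooth j).differentiable (by simp)) j q x]
  -- pointwise bound on the commutator
  have hnb : ∀ x : R2, ‖opP φ l (fun y => ((β (y - q) : ℝ) : ℂ) * u y) x‖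
      ≤ M0 * ‖opA φ (⇑u) x‖ + (M1 * ‖opB φ (⇑u) x‖ + (M00 + M11) / 4 * ‖u x‖) := by
    intro x
    have h := comm_P l hgA hgB hcs u x
    rw [hPu x, mul_zero, zero_add, hd1 0 x, hd1 1 x, hd2 0 x, hd2 1 x] at h
    rw [h]
    have e0 : ‖(-Complex.I) * ((pdR 0 β (x - q) : ℝ) : ℂ) * opA φ (⇑u) x‖
        ≤ M0 * ‖opA φ (⇑u) x‖ := by
      rw [norm_mul, norm_mul, norm_neg, Complex.norm_I, one_mul, Complex.norm_real]
      exact mul_le_mul_of_nonneg_right (hM0 _) (norm_nonneg _)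
    have e1 : ‖(-Complex.I) * ((pdR 1 β (x - q) : ℝ) : ℂ) * opB φ (⇑u) x‖
        ≤ M1 * ‖opB φ (⇑u) x‖ := by
      rw [norm_mul, norm_mul, norm_neg, Complex.norm_I, one_mul, Complex.norm_real]
      exact mul_le_mul_of_nonneg_right (hM1 _) (norm_nonneg _)
    have e2 : ‖(((pdR 0 (pdR 0 β) (x - q) : ℝ) : ℂ) + ((pdR 1 (pdR 1 β) (x - q) : ℝ) : ℂ)) / 4
          * u x‖ ≤ (M00 + M11) / 4 * ‖u x‖ := by
      rw [norm_mul, norm_div]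
      have h4 : ‖(4:ℂ)‖ = 4 := by
        norm_num
      have hsum : ‖((pdR 0 (pdR 0 β) (x - q) : ℝ) : ℂ) + ((pdR 1 (pdR 1 β) (x - q) : ℝ) : ℂ)‖
          ≤ M00 + M11 := by
        refine (norm_add_le _ _).trans ?_
        rw [Complex.norm_real, Complex.norm_real]
        exact add_le_add (hM00 _) (hM11 _)
      rw [h4]
      have hdiv : ‖((pdR 0 (pdR 0 β) (x - q) : ℝ) : ℂ)
          + ((pdR 1 (pdR 1 β) (x - q) : ℝ) : ℂ)‖ / 4 ≤ (M00 + M11) / 4 := by linarith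
      exact mul_le_mul_of_nonneg_right hdiv (norm_nonneg _)
    refine (norm_sub_le _ _).trans (le_trans (add_le_add_left (norm_add_le _ _) _) ?_)
    linarith
  -- energy estimate
  obtain ⟨hEA, hEB⟩ := energy_est hφ_smooth hgA hgB hC2 u hPu
  have hIu : (0:ℝ) ≤ ∫ x, ‖u x‖ ^ 2 := integral_nonneg fun x => sq_nonneg _
  have hlK : C2 / 2 + l ^ 2 ≤ K := by
    have hll : l ^ 2 ≤ Λ ^ 2 := pow_le_pow_left₀ hl.1 hl.2 2
    rw [hKdef]; linarith
  have hEA' : (∫ x, ‖opA φ (⇑u) x‖ ^ 2) ≤ K * ∫ x, ‖u x‖ ^ 2 :=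
    le_trans hEA (mul_le_mul_of_nonneg_right hlK hIu)
  have hEB' : (∫ x, ‖opB φ (⇑u) x‖ ^ 2) ≤ K * ∫ x, ‖u x‖ ^ 2 :=
    le_trans hEB (mul_le_mul_of_nonneg_right hlK hIu)
  have hAnorm : eLpNorm (opA φ (⇑u)) 2 (volume : Measure R2)
      ≤ ENNReal.ofReal (Real.sqrt K) * eLpNorm (⇑u) 2 (volume : Measure R2) := by
    rw [← aS_coe hgA u]
    refine eLpNorm_le_sqrt _ u hKnn ?_
    rw [aS_coe hgA u]
    exact hEA'
  have hBnorm : eLpNorm (opB φ (⇑u)) 2 (volume : Measure R2)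
      ≤ ENNReal.ofReal (Real.sqrt K) * eLpNorm (⇑u) 2 (volume : Measure R2) := by
    rw [← bS_coe hgB u]
    refine eLpNorm_le_sqrt _ u hKnn ?_
    rw [bS_coe hgB u]
    exact hEB'
  have hAcont : Continuous (opA φ (⇑u)) := by
    rw [← aS_coe hgA u]; exact (aS hgA u).continuous
  have hBcont : Continuous (opB φ (⇑u)) := by
    rw [← bS_coe hgB u]; exact (bS hgB u).continuous
  have m1 : AEStronglyMeasurable (fun x => M0 * ‖opA φ (⇑u) x‖) (volume : Measure R2) :=
    (continuous_const.mul hAcont.norm).aestronglyMeasurable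
  have m2 : AEStronglyMeasurable (fun x => M1 * ‖opB φ (⇑u) x‖) (volume : Measure R2) :=
    (continuous_const.mul hBcont.norm).aestronglyMeasurable
  have m3 : AEStronglyMeasurable (fun x => (M00 + M11) / 4 * ‖u x‖) (volume : Measure R2) :=
    (continuous_const.mul u.continuous.norm).aestronglyMeasurable
  calc eLpNorm (opP φ l (fun x => ((β (x - q) : ℝ) : ℂ) * u x)) 2 volume
      ≤ eLpNorm (fun x => M0 * ‖opA φ (⇑u) x‖
          + (M1 * ‖opB φ (⇑u) x‖ + (M00 + M11) / 4 * ‖u x‖)) 2 volume :=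
        eLpNorm_mono_real hnb
    _ ≤ eLpNorm (fun x => M0 * ‖opA φ (⇑u) x‖) 2 volume
        + eLpNorm (fun x => M1 * ‖opB φ (⇑u) x‖ + (M00 + M11) / 4 * ‖u x‖) 2 volume :=
        eLpNorm_add_le m1 (m2.add m3) one_le_two
    _ ≤ eLpNorm (fun x => M0 * ‖opA φ (⇑u) x‖) 2 volume
        + (eLpNorm (fun x => M1 * ‖opB φ (⇑u) x‖) 2 volume
          + eLpNorm (fun x => (M00 + M11) / 4 * ‖u x‖) 2 volume) :=
        add_le_add_right (eLpNorm_add_le m2 m3 one_le_two) _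
    _ = ENNReal.ofReal M0 * eLpNorm (opA φ (⇑u)) 2 volume
        + (ENNReal.ofReal M1 * eLpNorm (opB φ (⇑u)) 2 volume
          + ENNReal.ofReal ((M00 + M11) / 4) * eLpNorm (⇑u) 2 volume) := by
        rw [const_mul_norm_eLpNorm hM0nn, const_mul_norm_eLpNorm hM1nn,
          const_mul_norm_eLpNorm (by linarith : (0:ℝ) ≤ (M00 + M11) / 4)]
    _ ≤ ENNReal.ofReal M0 * (ENNReal.ofReal (Real.sqrt K) * eLpNorm (⇑u) 2 volume)
        + (ENNReal.ofReal M1 * (ENNReal.ofReal (Real.sqrt K) * eLpNorm (⇑u) 2 volume)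
          + ENNReal.ofReal ((M00 + M11) / 4) * eLpNorm (⇑u) 2 volume) :=
        add_le_add (mul_le_mul_right hAnorm _)
          (add_le_add (mul_le_mul_right hBnorm _) le_rfl)
    _ = ENNReal.ofReal (M0 * Real.sqrt K + (M1 * Real.sqrt K + (M00 + M11) / 4))
          * eLpNorm (⇑u) 2 volume := by
        rw [ENNReal.ofReal_add (mul_nonneg hM0nn hsqnn)
            (add_nonneg (mul_nonneg hM1nn hsqnn) (by linarith)),
          ENNReal.ofReal_add (mul_nonneg hM1nn hsqnn) (by linarith),
          ENNReal.ofReal_mul hM0nn, ENNReal.ofReal_mul hM1nn]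
        ring
    _ ≤ ENNReal.ofReal ((M0 + M1) * Real.sqrt K + (M00 + M11) / 4 + 1)
          * eLpNorm (⇑u) 2 volume := by
        apply mul_le_mul_left
        apply ENNReal.ofReal_le_ofReal
        nlinarith
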